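/- arXiv:1402.3610 — 2 statements merged into one kernel-verified Lean document; each statement's English description precedes it below -/
import Mathlib

section
/- If f is a budget-balanced distribution rule for a welfare function W = (𝒯, Q) (with W(∅) = 0), then each recursively defined basis distribution rule f^T is a budget-balanced distribution rule for the inclusion function W^T; that is, for every T ∈ 𝒯 and every S ⊆ N, Σ_{i∈S} f^T(i, S) = W^T(S), equivalently Σ_{i∈T} f^T(i, T) = 1. -/
open scoped BigOperators Classical

namespace CostSharing

/-- A welfare sharing game on player set `N`: a finite resource set, a nonempty
finite action set (a collection of subsets of resources) for each player, and a
local welfare function at each resource. -/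
structure Game (N : Type) [Fintype N] [DecidableEq N] where
  R : Type
  [finR : Fintype R]
  [decR : DecidableEq R]
  act : N → Finset (Finset R)
  act_nonempty : ∀ i, (act i).Nonempty
  Wr : R → Finset N → ℝ

attribute [instance] Game.finR Game.decR

variable {N : Type} [Fintype N] [DecidableEq N]

/-- `{a}_r`: the set of players choosing resource `r` in profile `a`. -/
def playersAt {G : Game N} (a : N → Finset G.R) (r : G.R) : Finset N :=
  Finset.univ.filter fun i => r ∈ a i

/-- Player `i`'s utility, where `fD` assigns to each local welfare function its
local distribution rule (so resources with identical welfare functions have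
identical distribution rules). -/
noncomputable def utility (G : Game N) (fD : (Finset N → ℝ) → N → Finset N → ℝ)
    (a : N → Finset G.R) (i : N) : ℝ :=
  ∑ r ∈ a i, fD (G.Wr r) i (playersAt a r)

/-- Pure Nash equilibrium. -/
def IsPNE (G : Game N) (fD : (Finset N → ℝ) → N → Finset N → ℝ)
    (a : N → Finset G.R) : Prop :=
  (∀ i, a i ∈ G.act i) ∧
    ∀ i : N, ∀ b ∈ G.act i,
      utility G fD (Function.update a i b) i ≤ utility G fD a i

/-- Every game in the class `G(N, f^𝕎, 𝕎)` possesses a pure Nash equilibrium. -/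
def GuaranteesPNE (𝕎 : Set (Finset N → ℝ))
    (fD : (Finset N → ℝ) → N → Finset N → ℝ) : Prop :=
  ∀ G : Game N, (∀ r : G.R, G.Wr r ∈ 𝕎) → ∃ a, IsPNE G fD a

/-- Every game in the single-welfare-function class `G(N, f, W)` possesses a
pure Nash equilibrium. -/
def GuaranteesPNE1 (W : Finset N → ℝ) (f : N → Finset N → ℝ) : Prop :=
  ∀ G : Game N, (∀ r : G.R, G.Wr r = W) → ∃ a, IsPNE G (fun _ => f) a

/-- A distribution rule allocates nothing to absent players. -/
def DistRule (f : N → Finset N → ℝ) : Prop :=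
  ∀ (i : N) (S : Finset N), i ∉ S → f i S = 0

/-- Budget balance: `∑_{i∈S} f(i,S) = W(S)`. -/
def BudgetBalanced (W : Finset N → ℝ) (f : N → Finset N → ℝ) : Prop :=
  ∀ S : Finset N, ∑ i ∈ S, f i S = W S

/-- The inclusion (unanimity) welfare function `W^T`. -/
def unanimity (T S : Finset N) : ℝ := if T ⊆ S then 1 else 0

/-- The basis coefficient `q^W_T` of `W` on the unanimity basis (Möbius inversion). -/
def coeff (W : Finset N → ℝ) (T : Finset N) : ℝ :=
  ∑ R ∈ T.powerset, (-1 : ℝ) ^ (T.card - R.card) * W R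

/-- The support `𝒯^W` of the basis representation of `W`. -/
noncomputable def supp (W : Finset N → ℝ) : Finset (Finset N) :=
  Finset.univ.filter fun T => coeff W T ≠ 0

/-- `𝒯^W(S)`: the contributing coalitions within `S`. -/
noncomputable def suppIn (W : Finset N → ℝ) (S : Finset N) : Finset (Finset N) :=
  (supp W).filter (· ⊆ S)

/-- `N^W(S)`: the contributing players within `S`. -/
noncomputable def contributors (W : Finset N → ℝ) (S : Finset N) : Finset N :=
  (suppIn W S).biUnion id

/-- A weight system `ω = (λ, Σ)`: strictly positive player weights together with
an ordered partition of `N`. -/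
structure WeightSystem (N : Type) [Fintype N] [DecidableEq N] where
  lam : N → ℝ
  lam_pos : ∀ i, 0 < lam i
  m : ℕ
  part : Fin m → Finset N
  part_nonempty : ∀ k, (part k).Nonempty
  part_disjoint : ∀ k l, k ≠ l → Disjoint (part k) (part l)
  part_covers : ∀ i : N, ∃ k, i ∈ part k

/-- The index of the block of the ordered partition containing player `i`. -/
noncomputable def WeightSystem.idx (ω : WeightSystem N) (i : N) : Fin ω.m :=
  (ω.part_covers i).choose

/-- `T̄ = T ∩ S_k` where `k = min {j : S_j ∩ T ≠ ∅}`. -/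
noncomputable def WeightSystem.bar (ω : WeightSystem N) (T : Finset N) : Finset N :=
  T.filter fun i => ∀ j ∈ T, ω.idx i ≤ ω.idx j

/-- The generalized weighted Shapley value basis rule `f^T_{GWSV}[ω]`. -/
noncomputable def fGWSVbasis (ω : WeightSystem N) (T : Finset N) (i : N)
    (S : Finset N) : ℝ :=
  if i ∈ ω.bar T ∧ T ⊆ S then ω.lam i / ∑ j ∈ ω.bar T, ω.lam j else 0

/-- The generalized weighted marginal contribution basis rule `f^T_{GWMC}[ω]`. -/
noncomputable def fGWMCbasis (ω : WeightSystem N) (T : Finset N) (i : N)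
    (S : Finset N) : ℝ :=
  if i ∈ ω.bar T ∧ T ⊆ S then ω.lam i else 0

/-- The generalized weighted Shapley value distribution rule `f^{W'}_{GWSV}[ω]`. -/
noncomputable def fGWSV (ω : WeightSystem N) (W' : Finset N → ℝ) (i : N)
    (S : Finset N) : ℝ :=
  ∑ T ∈ supp W', coeff W' T * fGWSVbasis ω T i S

/-- The generalized weighted marginal contribution distribution rule
`f^{W''}_{GWMC}[ω]`. -/
noncomputable def fGWMC (ω : WeightSystem N) (W'' : Finset N → ℝ) (i : N)
    (S : Finset N) : ℝ :=
  ∑ T ∈ supp W'', coeff W'' T * fGWMCbasis ω T i S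

/-- The recursively defined basis distribution rules `f^T` of a distribution
rule `f` for `W` (recursion along the min-partition of `(𝒯^W, ⊆)`). -/
noncomputable def basisRule (W : Finset N → ℝ) (f : N → Finset N → ℝ)
    (T : Finset N) (i : N) (S : Finset N) : ℝ :=
  if T ⊆ S then
    (1 / coeff W T) *
      (f i T - ∑ T' ∈ ((suppIn W T).erase T).attach,
        coeff W T'.1 * basisRule W f T'.1 i S)
  else 0
termination_by T.card
decreasing_by
  have h := T'.2
  simp only [Finset.mem_erase, suppIn, Finset.mem_filter] at h
  exact Finset.card_lt_card (Finset.ssubset_iff_subset_ne.mpr ⟨h.2.2, h.1⟩)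



set_option linter.unusedSectionVars false in
lemma neg_one_pow_sum (x : Finset N) :
    ∑ U ∈ x.powerset, (-1 : ℝ) ^ U.card = if x = ∅ then 1 else 0 := by
  have h := Finset.sum_powerset_neg_one_pow_card (x := x)
  have : ((∑ m ∈ x.powerset, (-1 : ℤ) ^ m.card : ℤ) : ℝ)
      = ∑ U ∈ x.powerset, (-1 : ℝ) ^ U.card := by push_cast; ring
  rw [← this, h]; split <;> norm_num

lemma sum_coeff (W : Finset N → ℝ) (S : Finset N) :
    ∑ T ∈ S.powerset, coeff W T = W S := by
  unfold coeff
  rw [Finset.sum_comm' (s := S.powerset) (t := fun T => T.powerset)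
    (t' := S.powerset) (s' := fun R => S.powerset.filter (R ⊆ ·))
    (h := by
      intro T R
      simp only [Finset.mem_powerset, Finset.mem_filter]
      constructor
      · rintro ⟨h1, h2⟩; exact ⟨⟨h1, h2⟩, h2.trans h1⟩
      · rintro ⟨⟨h1, h2⟩, _⟩; exact ⟨h1, h2⟩)]
  rw [Finset.sum_eq_single S]
  · -- inner sum over T with S ⊆ T ⊆ S is just T = S
    have : S.powerset.filter (S ⊆ ·) = {S} := by
      ext T
      simp only [Finset.mem_filter, Finset.mem_powerset, Finset.mem_singleton]
      constructor
      · rintro ⟨h1, h2⟩; exact Finset.Subset.antisymm h1 h2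
      · rintro rfl; exact ⟨le_rfl, le_rfl⟩
    rw [this, Finset.sum_singleton]; simp
  · intro R hR hRS
    rw [Finset.mem_powerset] at hR
    have key : ∀ T ∈ S.powerset.filter (R ⊆ ·),
        (-1 : ℝ) ^ (T.card - R.card) * W R = (-1 : ℝ) ^ (T \ R).card * W R := by
      intro T hT
      rw [Finset.mem_filter] at hT
      rw [Finset.card_sdiff_of_subset hT.2]
    rw [Finset.sum_congr rfl key, ← Finset.sum_mul]
    have bij : ∑ T ∈ S.powerset.filter (R ⊆ ·), (-1 : ℝ) ^ (T \ R).card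
        = ∑ U ∈ (S \ R).powerset, (-1 : ℝ) ^ U.card := by
      apply Finset.sum_nbij' (i := fun T => T \ R) (j := fun U => U ∪ R)
      · intro T hT
        rw [Finset.mem_filter, Finset.mem_powerset] at hT
        rw [Finset.mem_powerset]
        exact Finset.sdiff_subset_sdiff hT.1 le_rfl
      · intro U hU
        rw [Finset.mem_powerset] at hU
        rw [Finset.mem_filter, Finset.mem_powerset]
        constructor
        · exact Finset.union_subset (hU.trans (Finset.sdiff_subset)) hR
        · exact Finset.subset_union_right
      · intro T hT
        rw [Finset.mem_filter] at hT
        rw [Finset.sdiff_union_of_subset hT.2]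
      · intro U hU
        rw [Finset.mem_powerset] at hU
        have : Disjoint U R := Finset.disjoint_of_subset_left hU Finset.sdiff_disjoint
        rw [Finset.union_sdiff_right, Finset.sdiff_eq_self_of_disjoint this]
      · intro T hT; rfl
    rw [bij, neg_one_pow_sum]
    have : S \ R ≠ ∅ := by
      intro h
      exact hRS (Finset.Subset.antisymm hR (by
        intro x hx
        by_contra hxR
        have : x ∈ S \ R := Finset.mem_sdiff.mpr ⟨hx, hxR⟩
        simp [h] at this))
    rw [if_neg this, zero_mul]
  · intro h; exact absurd (Finset.mem_powerset.mpr le_rfl) h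


lemma sum_coeff_suppIn (W : Finset N → ℝ) (S : Finset N) :
    ∑ T ∈ suppIn W S, coeff W T = W S := by
  rw [← sum_coeff W S]
  apply Finset.sum_subset
  · intro T hT
    simp only [suppIn, supp, Finset.mem_filter, Finset.mem_univ] at hT
    exact Finset.mem_powerset.mpr hT.2
  · intro T hTP hT
    simp only [suppIn, supp, Finset.mem_filter, Finset.mem_univ, true_and] at hT
    by_contra h
    exact hT ⟨h, Finset.mem_powerset.mp hTP⟩

lemma basisRule_sum (W : Finset N → ℝ) (f : N → Finset N → ℝ)
    (hdist : DistRule f) (hbb : BudgetBalanced W f) :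
    ∀ T, T ∈ supp W →
      ∀ S : Finset N, ∑ i ∈ S, basisRule W f T i S = unanimity T S := by
  intro T
  induction T using Finset.strongInduction with
  | _ T ih =>
    intro hT S
    by_cases hTS : T ⊆ S
    · have hq : coeff W T ≠ 0 := by
        simpa [supp] using hT
      have step : ∀ i ∈ S, basisRule W f T i S =
          (1 / coeff W T) * (f i T - ∑ T' ∈ ((suppIn W T).erase T).attach,
            coeff W T'.1 * basisRule W f T'.1 i S) := by
        intro i _
        rw [basisRule, if_pos hTS]
      rw [Finset.sum_congr rfl step, ← Finset.mul_sum, Finset.sum_sub_distrib]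
      have h1 : ∑ i ∈ S, f i T = W T := by
        rw [← hbb T]
        exact (Finset.sum_subset hTS (fun i _ hi => hdist i T hi)).symm
      have h2 : ∑ i ∈ S, ∑ T' ∈ ((suppIn W T).erase T).attach,
          coeff W T'.1 * basisRule W f T'.1 i S
          = ∑ T' ∈ (suppIn W T).erase T, coeff W T' := by
        rw [Finset.sum_comm]
        rw [← Finset.sum_attach ((suppIn W T).erase T)
          (fun T' => coeff W T')]
        apply Finset.sum_congr rfl
        intro T' _
        have hmem := T'.2
        simp only [Finset.mem_erase, suppIn, Finset.mem_filter] at hmem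
        have hss : T'.1 ⊂ T :=
          Finset.ssubset_iff_subset_ne.mpr ⟨hmem.2.2, hmem.1⟩
        have hsupp : T'.1 ∈ supp W := hmem.2.1
        rw [← Finset.mul_sum, ih T'.1 hss hsupp S,
          unanimity, if_pos (hmem.2.2.trans hTS), mul_one]
      rw [h1, h2]
      have h3 : W T - ∑ T' ∈ (suppIn W T).erase T, coeff W T' = coeff W T := by
        have hTmem : T ∈ suppIn W T := by
          simp only [suppIn, Finset.mem_filter]
          exact ⟨hT, le_rfl⟩
        have := Finset.add_sum_erase _ (coeff W) hTmem
        rw [sum_coeff_suppIn] at this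
        linarith
      rw [h3, one_div, inv_mul_cancel₀ hq, unanimity, if_pos hTS]
    · rw [unanimity, if_neg hTS]
      apply Finset.sum_eq_zero
      intro i _
      rw [basisRule, if_neg hTS]


/-- **Lemma 4.1.** If `f` is a budget-balanced distribution rule for
`W = (𝒯, Q)`, then each recursively defined basis distribution rule `f^T`
(for `T ∈ 𝒯`) is a budget-balanced distribution rule for the inclusion
function `W^T`: `∑_{i∈S} f^T(i,S) = W^T(S)` for all `S`, equivalently
`∑_{i∈T} f^T(i,T) = 1`. -/
theorem basisRule_budget_balanced (N : Type) [Fintype N] [DecidableEq N]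
    (W : Finset N → ℝ) (f : N → Finset N → ℝ)
    (hW0 : W ∅ = 0) (hdist : DistRule f) (hbb : BudgetBalanced W f) :
    ∀ T ∈ supp W,
      (∀ S : Finset N, ∑ i ∈ S, basisRule W f T i S = unanimity T S) ∧
      ∑ i ∈ T, basisRule W f T i T = 1 := by
  intro T hT
  have h := basisRule_sum W f hdist hbb T hT
  refine ⟨h, ?_⟩
  rw [h T, unanimity, if_pos (Finset.Subset.refl T)]

end CostSharing
end

section
/- If f is a budget-balanced distribution rule for a welfare function W = (𝒯, Q) (with W(∅) = 0) on a finite player set N that guarantees the existence of a pure Nash equilibrium in all games in G(N, f, W), then the recursively defined basis distribution rules {f^T}_{T∈𝒯} satisfy f(i, S) = Σ_{T∈𝒯} q_T · f^T(i, S) for all S ⊆ N and all i ∈ S. -/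
open scoped BigOperators Classical

/-!
Expand each share `f(p, ·)` in the unanimity basis, with coefficients `c_p(S)`. Budget balance
gives `∑_p c_p(S) = q_S`. The heart of the argument is that `c_i(S)` and `c_j(S)` never have
opposite signs: otherwise a matching-pennies game in `G(N, f, W)`, in which the players of
`S ∖ {i, j}` are frozen and `i`, `j` each choose between two layers of resources indexed by the
subsets of `S ∖ {i, j}`, has gains from deviating equal to `± c_i(S)` and `± c_j(S)` with a
common sign, so it has no equilibrium. A family of reals with pairwise nonnegative products and
zero sum vanishes, so `c_p(S) = 0` whenever `q_S = 0`. Thus `f(i, ·)` is supported on `𝒯`, and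
the recursion defining `f^T` is the triangular system whose solution is `q_T f^T(i, S) = c_i(T)`
for `T ⊆ S`; Möbius inversion then gives the decomposition.
-/

namespace CostSharing

open Finset

variable {N : Type}

lemma coeff_sub (g h : Finset N → ℝ) (T : Finset N) :
    coeff (g - h) T = coeff g T - coeff h T := by
  simp only [coeff, Pi.sub_apply, mul_sub, sum_sub_distrib]

lemma coeff_sum {ι : Type} (s : Finset ι) (g : ι → Finset N → ℝ) (T : Finset N) :
    coeff (∑ p ∈ s, g p) T = ∑ p ∈ s, coeff (g p) T := by
  simp only [coeff, Finset.sum_apply, mul_sum]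
  exact sum_comm

lemma coeff_insert [DecidableEq N] (g : Finset N → ℝ) {a : N} {T : Finset N} (ha : a ∉ T) :
    coeff g (insert a T) = coeff (fun U => g (insert a U)) T - coeff g T := by
  have hfar : ∑ R ∈ T.powerset, (-1 : ℝ) ^ (#T + 1 - #R) * g R = -coeff g T := by
    rw [coeff, ← sum_neg_distrib]
    refine sum_congr rfl fun R hR => ?_
    have : #T + 1 - #R = #T - #R + 1 := by have := card_le_card (mem_powerset.mp hR); omega
    rw [this, pow_succ]
    ring
  have hnear : ∑ R ∈ T.powerset, (-1 : ℝ) ^ (#T + 1 - #(insert a R)) * g (insert a R) =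
      coeff (fun U => g (insert a U)) T := by
    refine sum_congr rfl fun R hR => ?_
    rw [card_insert_of_notMem fun h => ha (mem_powerset.mp hR h), Nat.add_sub_add_right]
  rw [coeff, sum_powerset_insert ha, card_insert_of_notMem ha, hfar, hnear]
  ring

lemma sum_powerset_coeff [DecidableEq N] (g : Finset N → ℝ) (S : Finset N) :
    ∑ T ∈ S.powerset, coeff g T = g S := by
  induction S using Finset.induction_on generalizing g with
  | empty => simp [coeff]
  | @insert a S ha ih =>
    rw [sum_powerset_insert ha,
      sum_congr rfl fun T hT => coeff_insert g fun h => ha (mem_powerset.mp hT h),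
      sum_sub_distrib, ih, ih]
    ring

lemma eq_zero_of_sum_eq_zero_of_mul_nonneg {ι : Type} {s : Finset ι} {c : ι → ℝ}
    (hsum : ∑ q ∈ s, c q = 0) (hmul : ∀ p q, 0 ≤ c p * c q) {p : ι} (hp : p ∈ s) : c p = 0 := by
  have hsq : c p * c p ≤ 0 :=
    calc c p * c p ≤ ∑ q ∈ s, c p * c q := single_le_sum (fun q _ => hmul p q) hp
      _ = 0 := by rw [← mul_sum, hsum, mul_zero]
  exact mul_self_eq_zero.mp (le_antisymm hsq (mul_self_nonneg _))

lemma coeff_eq_zero_of_notMem {f : N → Finset N → ℝ} (hdist : DistRule f) {i : N}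
    {T : Finset N} (hi : i ∉ T) : coeff (f i) T = 0 :=
  sum_eq_zero fun R hR => by
    rw [hdist i R fun h => hi (mem_powerset.mp hR h), mul_zero]

lemma eq_sum_of_budgetBalanced [Fintype N] {W : Finset N → ℝ} {f : N → Finset N → ℝ}
    (hdist : DistRule f) (hbb : BudgetBalanced W f) : W = ∑ p, f p := by
  ext S
  rw [← hbb S, Finset.sum_apply]
  exact sum_subset (subset_univ S) fun p _ hp => hdist p S hp

def marginal [DecidableEq N] (f : N → Finset N → ℝ) (i j : N) (C : Finset N) : ℝ :=
  f i (insert i (insert j C)) - f i (insert i C)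

lemma coeff_eq_coeff_marginal [DecidableEq N] {f : N → Finset N → ℝ} (hdist : DistRule f)
    {i j : N} {S : Finset N} (hi : i ∈ S) (hj : j ∈ S) (hij : i ≠ j) :
    coeff (f i) S = coeff (marginal f i j) ((S.erase i).erase j) := by
  set T := (S.erase i).erase j
  have hjT : j ∉ T := notMem_erase j _
  have hiT : i ∉ insert j T := by simp [T, hij]
  have hS : S = insert i (insert j T) := by
    rw [insert_erase (mem_erase.mpr ⟨hij.symm, hj⟩), insert_erase hi]
  rw [hS, coeff_insert _ hiT, coeff_eq_zero_of_notMem hdist hiT, sub_zero,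
    coeff_insert _ hjT, ← coeff_sub]
  rfl

lemma mem_playersAt [Fintype N] [DecidableEq N] {G : Game N} (a : N → Finset G.R) (r : G.R)
    (p : N) : p ∈ playersAt a r ↔ r ∈ a p := by
  simp [playersAt]

def evenCodim (T C : Finset N) : Bool := decide (Even (#T - #C))

lemma sum_powerset_ite_evenCodim (T : Finset N) (g : Finset N → ℝ) (x y : Bool) :
    ∑ C ∈ T.powerset, (if xor x (evenCodim T C) = y then g C else -g C) =
      (if xor x y then 1 else -1) * coeff g T := by
  rw [coeff, mul_sum]
  refine sum_congr rfl fun C _ => ?_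
  rw [neg_one_pow_eq_ite]
  by_cases h : Even (#T - #C) <;> cases x <;> cases y <;> simp [evenCodim, h]

section MatchingPennies

variable [DecidableEq N] (T : Finset N) (i j : N)

/-- The resources are pairs `(C, b)` with `C ⊆ T`; a player `p ∉ {i, j}` uses every resource
whose `C` contains `p`. Player `j` uses the layer `b = s`, player `i` the layer
`b = s xor evenCodim T C`, so they meet on `(C, ·)` exactly when `evenCodim T C = s_i xor s_j`. -/
def pennyStrategy (p : N) (s : Bool) : Finset (Finset N × Bool) :=
  if p = i then T.powerset.image fun C => (C, xor s (evenCodim T C))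
  else if p = j then T.powerset.image fun C => (C, s)
  else (T.powerset.filter (p ∈ ·)) ×ˢ univ

abbrev penniesGame [Fintype N] (W : Finset N → ℝ) : Game N where
  R := Finset N × Bool
  act p := univ.image (pennyStrategy T i j p)
  act_nonempty _ := univ_nonempty.image _
  Wr _ := W

def pennyProfile (x y : Bool) (p : N) : Finset (Finset N × Bool) :=
  pennyStrategy T i j p (if p = i then x else y)

variable {T i j}

lemma exists_eq_pennyProfile [Fintype N] {W : Finset N → ℝ} (hij : i ≠ j)
    {a : N → Finset (Finset N × Bool)} (ha : ∀ p, a p ∈ (penniesGame T i j W).act p) :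
    ∃ x y, a = pennyProfile T i j x y := by
  choose s hs using fun p => mem_image.mp (ha p)
  refine ⟨s i, s j, funext fun p => ?_⟩
  rw [← (hs p).2, pennyProfile]
  by_cases hpi : p = i
  · subst hpi; simp
  by_cases hpj : p = j
  · subst hpj; simp [hpi]
  simp [pennyStrategy, hpi, hpj]

lemma update_pennyProfile_left (x y : Bool) :
    Function.update (pennyProfile T i j x y) i (pennyStrategy T i j i (!x)) =
      pennyProfile T i j (!x) y := by
  funext p
  by_cases hpi : p = i
  · subst hpi; simp [pennyProfile]
  · simp [pennyProfile, hpi]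

lemma update_pennyProfile_right (hij : i ≠ j) (x y : Bool) :
    Function.update (pennyProfile T i j x y) j (pennyStrategy T i j j (!y)) =
      pennyProfile T i j x (!y) := by
  funext p
  by_cases hpj : p = j
  · subst hpj; simp [pennyProfile, hij.symm]
  by_cases hpi : p = i
  · subst hpi; simp [pennyProfile, hij]
  · simp [pennyProfile, pennyStrategy, hpi, hpj]

variable [Fintype N] {W : Finset N → ℝ} {f : N → Finset N → ℝ}

lemma mem_playersAt_pennyProfile (hi : i ∉ T) (hj : j ∉ T) (hij : i ≠ j) (x y : Bool)
    {C : Finset N} (hC : C ⊆ T) (b : Bool) (p : N) :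
    p ∈ playersAt (G := penniesGame T i j W) (pennyProfile T i j x y) (C, b) ↔
      (p = i ∧ b = xor x (evenCodim T C)) ∨ (p = j ∧ b = y) ∨ p ∈ C := by
  rw [mem_playersAt]
  simp only [pennyProfile, pennyStrategy]
  by_cases hpi : p = i
  · subst hpi
    have hpC : p ∉ C := fun h => hi (hC h)
    simp [hij, hpC, hC, eq_comm]
  by_cases hpj : p = j
  · subst hpj
    have hpC : p ∉ C := fun h => hj (hC h)
    simp [hpi, hpC, hC, eq_comm]
  simp [hpi, hpj, hC]

lemma utility_pennyProfile_left (hi : i ∉ T) (hj : j ∉ T) (hij : i ≠ j) (x y : Bool) :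
    utility (penniesGame T i j W) (fun _ => f) (pennyProfile T i j x y) i =
      ∑ C ∈ T.powerset, f i (insert i (if xor x (evenCodim T C) = y then insert j C else C)) := by
  have hprofile :
      pennyProfile T i j x y i = T.powerset.image fun C => (C, xor x (evenCodim T C)) := by
    simp [pennyProfile, pennyStrategy]
  rw [utility, hprofile, sum_image fun C _ C' _ h => (Prod.mk.inj h).1]
  refine sum_congr rfl fun C hC => congrArg (f i) (ext fun p => ?_)
  rw [mem_playersAt_pennyProfile hi hj hij x y (mem_powerset.mp hC)]
  split_ifs <;> simp only [mem_insert] <;> grind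

lemma utility_pennyProfile_right (hi : i ∉ T) (hj : j ∉ T) (hij : i ≠ j) (x y : Bool) :
    utility (penniesGame T i j W) (fun _ => f) (pennyProfile T i j x y) j =
      ∑ C ∈ T.powerset, f j (insert j (if xor x (evenCodim T C) = y then insert i C else C)) := by
  have hprofile : pennyProfile T i j x y j = T.powerset.image fun C => (C, y) := by
    simp [pennyProfile, pennyStrategy, hij.symm]
  rw [utility, hprofile, sum_image fun C _ C' _ h => (Prod.mk.inj h).1]
  refine sum_congr rfl fun C hC => congrArg (f j) (ext fun p => ?_)
  rw [mem_playersAt_pennyProfile hi hj hij x y (mem_powerset.mp hC)]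
  split_ifs <;> simp only [mem_insert] <;> grind

lemma utility_sub_utility_flip_left (hi : i ∉ T) (hj : j ∉ T) (hij : i ≠ j) (x y : Bool) :
    utility (penniesGame T i j W) (fun _ => f) (pennyProfile T i j x y) i -
        utility (penniesGame T i j W) (fun _ => f) (pennyProfile T i j (!x) y) i =
      (if xor x y then 1 else -1) * coeff (marginal f i j) T := by
  rw [utility_pennyProfile_left hi hj hij, utility_pennyProfile_left hi hj hij,
    ← sum_sub_distrib, ← sum_powerset_ite_evenCodim T]
  refine sum_congr rfl fun C _ => ?_
  cases x <;> cases y <;> cases evenCodim T C <;> simp [marginal]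

lemma utility_sub_utility_flip_right (hi : i ∉ T) (hj : j ∉ T) (hij : i ≠ j) (x y : Bool) :
    utility (penniesGame T i j W) (fun _ => f) (pennyProfile T i j x y) j -
        utility (penniesGame T i j W) (fun _ => f) (pennyProfile T i j x (!y)) j =
      (if xor x y then 1 else -1) * coeff (marginal f j i) T := by
  rw [utility_pennyProfile_right hi hj hij, utility_pennyProfile_right hi hj hij,
    ← sum_sub_distrib, ← sum_powerset_ite_evenCodim T]
  refine sum_congr rfl fun C _ => ?_
  cases x <;> cases y <;> cases evenCodim T C <;> simp [marginal]

lemma not_isPNE_penniesGame (hi : i ∉ T) (hj : j ∉ T) (hij : i ≠ j)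
    (hneg : coeff (marginal f i j) T * coeff (marginal f j i) T < 0)
    (a : N → Finset (Finset N × Bool)) : ¬ IsPNE (penniesGame T i j W) (fun _ => f) a := by
  rintro ⟨hact, hstable⟩
  obtain ⟨x, y, rfl⟩ := exists_eq_pennyProfile hij hact
  have hleft := hstable i (pennyStrategy T i j i (!x)) (mem_image_of_mem _ (mem_univ _))
  have hright := hstable j (pennyStrategy T i j j (!y)) (mem_image_of_mem _ (mem_univ _))
  rw [update_pennyProfile_left] at hleft
  rw [update_pennyProfile_right hij] at hright
  have hgain_left := utility_sub_utility_flip_left (W := W) (f := f) hi hj hij x y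
  have hgain_right := utility_sub_utility_flip_right (W := W) (f := f) hi hj hij x y
  split_ifs at hgain_left hgain_right <;> nlinarith

end MatchingPennies

section Decomposition

variable [Fintype N] [DecidableEq N] {W : Finset N → ℝ} {f : N → Finset N → ℝ}

lemma coeff_mul_coeff_nonneg (hdist : DistRule f) (hPNE : GuaranteesPNE1 W f) (S : Finset N)
    (i j : N) : 0 ≤ coeff (f i) S * coeff (f j) S := by
  by_cases hi : i ∈ S
  swap
  · simp [coeff_eq_zero_of_notMem hdist hi]
  by_cases hj : j ∈ S
  swap
  · simp [coeff_eq_zero_of_notMem hdist hj]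
  obtain rfl | hij := eq_or_ne i j
  · exact mul_self_nonneg _
  rw [coeff_eq_coeff_marginal hdist hi hj hij, coeff_eq_coeff_marginal hdist hj hi hij.symm,
    erase_right_comm (a := j) (b := i)]
  by_contra hneg
  obtain ⟨a, ha⟩ := hPNE (penniesGame ((S.erase i).erase j) i j W) fun _ => rfl
  have hiT : i ∉ (S.erase i).erase j := fun h => notMem_erase i S (mem_of_mem_erase h)
  exact not_isPNE_penniesGame hiT (notMem_erase j _) hij (not_le.mp hneg) a ha

lemma coeff_eq_zero_of_coeff_eq_zero (hdist : DistRule f) (hbb : BudgetBalanced W f)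
    (hPNE : GuaranteesPNE1 W f) {T : Finset N} (hT : coeff W T = 0) (p : N) :
    coeff (f p) T = 0 := by
  rw [eq_sum_of_budgetBalanced hdist hbb, coeff_sum] at hT
  exact eq_zero_of_sum_eq_zero_of_mul_nonneg hT (coeff_mul_coeff_nonneg hdist hPNE T) (mem_univ p)

lemma sum_suppIn_coeff {g : Finset N → ℝ} (hsupp : ∀ T, coeff W T = 0 → coeff g T = 0)
    (S : Finset N) : ∑ T ∈ suppIn W S, coeff g T = g S := by
  rw [← sum_powerset_coeff g S]
  refine sum_subset (fun T hT => mem_powerset.mpr (mem_filter.mp hT).2) fun T hTS hT => ?_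
  refine hsupp T (not_not.mp fun hW => hT ?_)
  simp [suppIn, supp, hW, mem_powerset.mp hTS]

lemma coeff_mul_basisRule {p : N} (hsupp : ∀ T, coeff W T = 0 → coeff (f p) T = 0)
    {T S : Finset N} (hT : T ∈ supp W) (hTS : T ⊆ S) :
    coeff W T * basisRule W f T p S = coeff (f p) T := by
  induction T using Finset.strongInduction with
  | H T ih =>
  have hq : coeff W T ≠ 0 := (mem_filter.mp hT).2
  have hlower : ∑ T' ∈ (suppIn W T).erase T, coeff W T' * basisRule W f T' p S =
      ∑ T' ∈ (suppIn W T).erase T, coeff (f p) T' := by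
    refine sum_congr rfl fun T' hT' => ?_
    obtain ⟨hne, hT'supp, hT'T⟩ : T' ≠ T ∧ T' ∈ supp W ∧ T' ⊆ T := by
      simpa [suppIn] using hT'
    exact ih T' (ssubset_of_subset_of_ne hT'T hne) hT'supp (hT'T.trans hTS)
  have hsplit := sum_suppIn_coeff hsupp T
  have hTT : T ∈ suppIn W T := mem_filter.mpr ⟨hT, subset_rfl⟩
  rw [← add_sum_erase _ _ hTT] at hsplit
  rw [basisRule, if_pos hTS, sum_attach ((suppIn W T).erase T)
    fun T' => coeff W T' * basisRule W f T' p S, hlower]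
  field_simp
  linarith

end Decomposition

theorem basisRule_decomposes_general (N : Type) [Fintype N] [DecidableEq N]
    (W : Finset N → ℝ) (f : N → Finset N → ℝ)
    (hdist : DistRule f) (hbb : BudgetBalanced W f)
    (hPNE : GuaranteesPNE1 W f) :
    ∀ S : Finset N, ∀ i ∈ S,
      f i S = ∑ T ∈ supp W, coeff W T * basisRule W f T i S := by
  intro S i _
  have hsupp : ∀ T, coeff W T = 0 → coeff (f i) T = 0 :=
    fun T hT => coeff_eq_zero_of_coeff_eq_zero hdist hbb hPNE hT i
  rw [← sum_suppIn_coeff hsupp S, suppIn, sum_filter]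
  refine sum_congr rfl fun T hT => ?_
  split_ifs with hTS
  · exact (coeff_mul_basisRule hsupp hT hTS).symm
  · rw [basisRule, if_neg hTS, mul_zero]

/-- **Lemma 4.2.** If `f` is a budget-balanced distribution rule for
`W = (𝒯, Q)` guaranteeing a pure Nash equilibrium in all games in
`G(N, f, W)`, then the recursively defined basis distribution rules satisfy
`f(i,S) = ∑_{T∈𝒯} q_T · f^T(i,S)` for all `S ⊆ N` and `i ∈ S`. -/
theorem basisRule_decomposes (N : Type) [Fintype N] [DecidableEq N]
    (hN : 1 < Fintype.card N)
    (W : Finset N → ℝ) (f : N → Finset N → ℝ)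
    (hW0 : W ∅ = 0) (hdist : DistRule f) (hbb : BudgetBalanced W f)
    (hPNE : GuaranteesPNE1 W f) :
    ∀ S : Finset N, ∀ i ∈ S,
      f i S = ∑ T ∈ supp W, coeff W T * basisRule W f T i S :=
  basisRule_decomposes_general N W f hdist hbb hPNE

end CostSharing
end
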